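/- Let n ∈ ℕ with n ≥ 2 and 1 ≤ k ≤ n. Then there exists p* ∈ [(k-1)/(n-1), 1] such that ψ_{n,k} is strictly increasing on [0, p*] and strictly decreasing on [p*, 1]; in particular ψ_{n,k} attains its maximum over [0,1] at the unique point p*. -/

import Mathlib

open MeasureTheory

/-- Binomial upper tail `B_{n,p}({k,…,n})`. -/
noncomputable def binTail (n k : ℕ) (p : ℝ) : ℝ :=
  ∑ j ∈ Finset.Icc k n, (n.choose j : ℝ) * p ^ j * (1 - p) ^ (n - j)

/-- `ψ_{n,k}(p) = p⁻¹ B_{n,p}({k,…,n})`, extended continuously at `0`. -/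
noncomputable def psi (n k : ℕ) (p : ℝ) : ℝ :=
  if p = 0 then (if k = 1 then (n : ℝ) else 0) else p⁻¹ * binTail n k p

/-- `c_{n,k} = sup_{p ∈ [0,1]} ψ_{n,k}(p)`. -/
noncomputable def cnk (n k : ℕ) : ℝ := sSup (psi n k '' Set.Icc 0 1)

/-- `f_{n,k}(u) = u ⋅ sup_{p ∈ [u,1]} ψ_{n,k}(p)`. -/
noncomputable def fnk (n k : ℕ) (u : ℝ) : ℝ := u * sSup (psi n k '' Set.Icc u 1)

/-!
The Bernstein sums telescope under differentiation, so `B = binTail n k` has derivative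
`B' = n C(n-1,k-1) p^(k-1) (1-p)^(n-k)`, and away from `0` we get `p² ψ' = D := p B' - B`
(`psiDerivNum`). Now `D(0) = 0` and `D' = p B''` has the sign of `(k-1) - (n-1) p`, so `D`
rises on `[0, ρ]`, `ρ = (k-1)/(n-1)`, and falls on `[ρ, 1]`. For `k < n` we have `D(1) = -1`,
hence `D` is positive before a unique zero `p* ∈ [ρ, 1)` and negative after it; for `k = n`,
`D = (n-1) pⁿ` and `p* = 1`. Since `ψ` is itself a polynomial, it is continuous at `0` as well,
and the sign of `D` gives the monotonicity of `ψ` on both sides of `p*`.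
-/

open Set Polynomial

section Unimodal

variable {f f' g : ℝ → ℝ} {a b c ρ : ℝ}

theorem exists_pos_neg_of_strictMonoOn_of_strictAntiOn (haρ : a ≤ ρ) (hρb : ρ < b)
    (hmono : StrictMonoOn g (Icc a ρ)) (hanti : StrictAntiOn g (Icc ρ b))
    (hcont : ContinuousOn g (Icc ρ b)) (ha : g a = 0) (hb : g b < 0) :
    ∃ c ∈ Ico ρ b, (∀ x ∈ Ioo a c, 0 < g x) ∧ ∀ x ∈ Ioo c b, g x < 0 := by
  have hρ : 0 ≤ g ρ := ha ▸ hmono.monotoneOn ⟨le_rfl, haρ⟩ ⟨haρ, le_rfl⟩ haρ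
  obtain ⟨c, hc, hgc⟩ := intermediate_value_Icc' hρb.le hcont ⟨hb.le, hρ⟩
  have hcb : c < b := hc.2.lt_of_ne (by rintro rfl; linarith)
  refine ⟨c, ⟨hc.1, hcb⟩, fun x hx => ?_, fun x hx => ?_⟩
  · rcases le_total x ρ with hxρ | hρx
    · exact ha ▸ hmono ⟨le_rfl, haρ⟩ ⟨hx.1.le, hxρ⟩ hx.1
    · exact hgc ▸ hanti ⟨hρx, hx.2.le.trans hc.2⟩ hc hx.2
  · exact hgc ▸ hanti hc ⟨hc.1.trans hx.1.le, hx.2.le⟩ hx.1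

theorem strictMonoOn_strictAntiOn_of_hasDerivAt (hc : c ∈ Icc a b)
    (hf : ContinuousOn f (Icc a b)) (hderiv : ∀ x ∈ Ioo a b, HasDerivAt f (f' x) x)
    (hpos : ∀ x ∈ Ioo a c, 0 < f' x) (hneg : ∀ x ∈ Ioo c b, f' x < 0) :
    StrictMonoOn f (Icc a c) ∧ StrictAntiOn f (Icc c b) := by
  constructor
  · refine strictMonoOn_of_deriv_pos (convex_Icc a c) (hf.mono (Icc_subset_Icc_right hc.2))
      fun x hx => ?_
    rw [interior_Icc] at hx
    rw [(hderiv x ⟨hx.1, hx.2.trans_le hc.2⟩).deriv]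
    exact hpos x hx
  · refine strictAntiOn_of_deriv_neg (convex_Icc c b) (hf.mono (Icc_subset_Icc_left hc.1))
      fun x hx => ?_
    rw [interior_Icc] at hx
    rw [(hderiv x ⟨hc.1.trans_lt hx.1, hx.2⟩).deriv]
    exact hneg x hx

end Unimodal

theorem StrictMonoOn.apply_lt_of_strictAntiOn {α β : Type*} [LinearOrder α] [Preorder β]
    {f : α → β} {a b c p : α} (hmono : StrictMonoOn f (Icc a c))
    (hanti : StrictAntiOn f (Icc c b)) (hc : c ∈ Icc a b) (hp : p ∈ Icc a b) (hpc : p ≠ c) :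
    f p < f c := by
  rcases hpc.lt_or_gt with hpc | hcp
  · exact hmono ⟨hp.1, hpc.le⟩ ⟨hc.1, le_rfl⟩ hpc
  · exact hanti ⟨le_rfl, hc.2⟩ ⟨hcp.le, hp.2⟩ hcp

theorem derivative_sum_bernsteinPolynomial_Icc {R : Type*} [CommRing R] {n k : ℕ}
    (hk : 1 ≤ k) (hkn : k ≤ n) :
    derivative (∑ j ∈ Finset.Icc k n, bernsteinPolynomial R n j) =
      n * bernsteinPolynomial R (n - 1) (k - 1) := by
  obtain ⟨a, rfl⟩ : ∃ a, k = a + 1 := ⟨k - 1, by omega⟩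
  have htele := Finset.sum_range_sub' (fun i => bernsteinPolynomial R (n - 1) (a + i)) (n - a)
  rw [add_tsub_cancel_right, ← Finset.Ico_add_one_right_eq_Icc, Finset.sum_Ico_eq_sum_range,
    map_sum]
  simp only [add_right_comm a 1, bernsteinPolynomial.derivative_succ, ← Finset.mul_sum]
  simp only [← add_assoc] at htele
  rw [show n + 1 - (a + 1) = n - a by omega, htele,
    bernsteinPolynomial.eq_zero_of_lt R (show n - 1 < a + (n - a) by omega), sub_zero,
    add_zero]

theorem sub_one_div_sub_one_nonneg {k n : ℕ} (hk : 1 ≤ k) (hn : 1 ≤ n) :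
    0 ≤ ((k : ℝ) - 1) / ((n : ℝ) - 1) :=
  div_nonneg (sub_nonneg.2 (Nat.one_le_cast.2 hk)) (sub_nonneg.2 (Nat.one_le_cast.2 hn))

theorem sub_one_div_sub_one_lt_one {k n : ℕ} (hk : 1 ≤ k) (hkn : k < n) :
    ((k : ℝ) - 1) / ((n : ℝ) - 1) < 1 := by
  have hkn' : (k : ℝ) + 1 ≤ n := by exact_mod_cast hkn
  have hk' : (1 : ℝ) ≤ k := by exact_mod_cast hk
  rw [div_lt_one (by linarith)]
  linarith

noncomputable def binTailDeriv (n k : ℕ) (p : ℝ) : ℝ :=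
  n * (n - 1).choose (k - 1) * p ^ (k - 1) * (1 - p) ^ (n - k)

noncomputable def psiDerivNum (n k : ℕ) (p : ℝ) : ℝ :=
  p * binTailDeriv n k p - binTail n k p

section Psi

variable {n k : ℕ}

theorem hasDerivAt_binTail (hk : 1 ≤ k) (hkn : k ≤ n) (p : ℝ) :
    HasDerivAt (binTail n k) (binTailDeriv n k p) p := by
  have hB :
      binTail n k = fun p => (∑ j ∈ Finset.Icc k n, bernsteinPolynomial ℝ n j).eval p := by
    ext p
    simp [binTail, bernsteinPolynomial, eval_finsetSum]
  have h := (∑ j ∈ Finset.Icc k n, bernsteinPolynomial ℝ n j).hasDerivAt p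
  rw [derivative_sum_bernsteinPolynomial_Icc hk hkn, ← hB] at h
  have hval : binTailDeriv n k p = (n * bernsteinPolynomial ℝ (n - 1) (k - 1)).eval p := by
    simp [binTailDeriv, bernsteinPolynomial, show n - 1 - (k - 1) = n - k by omega, mul_assoc]
  rwa [hval]

theorem binTail_zero (hk : 1 ≤ k) : binTail n k 0 = 0 :=
  Finset.sum_eq_zero fun j hj => by
    simp [zero_pow (show j ≠ 0 by simp only [Finset.mem_Icc] at hj; omega)]

theorem binTail_one (hkn : k ≤ n) : binTail n k 1 = 1 := by
  rw [binTail, Finset.sum_eq_single_of_mem n (Finset.mem_Icc.mpr ⟨hkn, le_rfl⟩)]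
  · simp
  · intro j hj hjn
    simp [zero_pow (show n - j ≠ 0 by simp only [Finset.mem_Icc] at hj; omega)]

theorem psi_eq_sum (hk : 1 ≤ k) (p : ℝ) :
    psi n k p = ∑ j ∈ Finset.Icc k n, (n.choose j : ℝ) * p ^ (j - 1) * (1 - p) ^ (n - j) := by
  rcases eq_or_ne p 0 with rfl | hp
  · rw [psi, if_pos rfl]
    split_ifs with hk1
    · subst hk1
      rw [Finset.sum_eq_single 1]
      · simp
      · intro j hj hj1
        simp [zero_pow (show j - 1 ≠ 0 by simp only [Finset.mem_Icc] at hj; omega)]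
      · simp_all
    · refine (Finset.sum_eq_zero fun j hj => ?_).symm
      simp [zero_pow (show j - 1 ≠ 0 by simp only [Finset.mem_Icc] at hj; omega)]
  · rw [psi, if_neg hp, binTail, Finset.mul_sum]
    refine Finset.sum_congr rfl fun j hj => ?_
    obtain ⟨i, rfl⟩ : ∃ i, j = i + 1 :=
      ⟨j - 1, by simp only [Finset.mem_Icc] at hj; omega⟩
    rw [add_tsub_cancel_right, pow_succ]
    field_simp

theorem continuous_psi (hk : 1 ≤ k) : Continuous (psi n k) := by
  simp only [funext (psi_eq_sum hk)]
  fun_prop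

theorem hasDerivAt_psi (hk : 1 ≤ k) (hkn : k ≤ n) {p : ℝ} (hp : p ≠ 0) :
    HasDerivAt (psi n k) ((p ^ 2)⁻¹ * psiDerivNum n k p) p := by
  have h := (hasDerivAt_inv hp).mul (hasDerivAt_binTail hk hkn p)
  have hval : -(p ^ 2)⁻¹ * binTail n k p + p⁻¹ * binTailDeriv n k p =
      (p ^ 2)⁻¹ * psiDerivNum n k p := by
    rw [psiDerivNum]
    field_simp
    ring
  rw [hval] at h
  refine h.congr_of_eventuallyEq ?_
  filter_upwards [isOpen_ne.mem_nhds hp] with q hq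
  exact if_neg hq

theorem hasDerivAt_psiDerivNum (hk : 1 ≤ k) (hkn : k < n) (p : ℝ) :
    HasDerivAt (psiDerivNum n k)
      (n * (n - 1).choose (k - 1) * p ^ (k - 1) * (1 - p) ^ (n - k - 1) *
        ((k - 1) - (n - 1) * p)) p := by
  obtain ⟨a, m, rfl, rfl⟩ : ∃ a m, k = a + 1 ∧ n = a + m + 2 :=
    ⟨k - 1, n - k - 1, by omega, by omega⟩
  have hsub : a + m + 2 - 1 = a + m + 1 ∧ a + 1 - 1 = a ∧ a + m + 2 - (a + 1) = m + 1 ∧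
      a + m + 2 - (a + 1) - 1 = m := by omega
  simp only [hsub]
  set c : ℝ := ((a + m + 2 : ℕ) : ℝ) * ((a + m + 1).choose a : ℕ)
  have hD : psiDerivNum (a + m + 2) (a + 1) =
      fun p => c * p ^ (a + 1) * (1 - p) ^ (m + 1) - binTail (a + m + 2) (a + 1) p := by
    ext p
    simp only [psiDerivNum, binTailDeriv, hsub]
    ring
  have h : HasDerivAt
      (fun p => c * p ^ (a + 1) * (1 - p) ^ (m + 1) - binTail (a + m + 2) (a + 1) p)
      (c * ((a + 1 : ℕ) * p ^ a) * (1 - p) ^ (m + 1) +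
        c * p ^ (a + 1) * ((m + 1 : ℕ) * (1 - p) ^ m * -1) -
          binTailDeriv (a + m + 2) (a + 1) p) p :=
    (((hasDerivAt_pow (a + 1) p).const_mul c).mul
      ((hasDerivAt_pow (m + 1) (1 - p)).comp p ((hasDerivAt_id p).const_sub 1))).sub
      (hasDerivAt_binTail (by omega) (by omega) p)
  rw [hD]
  refine h.congr_deriv ?_
  simp only [binTailDeriv, hsub, c]
  push_cast
  ring

theorem continuous_psiDerivNum : Continuous (psiDerivNum n k) := by
  unfold psiDerivNum binTailDeriv binTail
  fun_prop

theorem psiDerivNum_zero (hk : 1 ≤ k) : psiDerivNum n k 0 = 0 := by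
  simp [psiDerivNum, binTail_zero hk]

theorem psiDerivNum_one (hkn : k < n) : psiDerivNum n k 1 = -1 := by
  simp [psiDerivNum, binTailDeriv, binTail_one hkn.le, zero_pow (show n - k ≠ 0 by omega)]

theorem psiDerivNum_self (hk : 1 ≤ k) (p : ℝ) : psiDerivNum k k p = (k - 1) * p ^ k := by
  obtain ⟨a, rfl⟩ : ∃ a, k = a + 1 := ⟨k - 1, by omega⟩
  simp only [psiDerivNum, binTailDeriv, binTail, Nat.cast_add, Nat.cast_one,
    add_tsub_cancel_right, Nat.choose_self, tsub_self, pow_zero, Finset.Icc_self,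
    Finset.sum_singleton, mul_one, one_mul]
  ring

theorem strictMonoOn_strictAntiOn_psiDerivNum (hk : 1 ≤ k) (hkn : k < n) :
    StrictMonoOn (psiDerivNum n k) (Icc 0 (((k : ℝ) - 1) / ((n : ℝ) - 1))) ∧
      StrictAntiOn (psiDerivNum n k) (Icc (((k : ℝ) - 1) / ((n : ℝ) - 1)) 1) := by
  have hn1 : (0 : ℝ) < n - 1 := by
    have : (2 : ℝ) ≤ n := by exact_mod_cast (show 2 ≤ n by omega)
    linarith
  have hρ : ((k : ℝ) - 1) / ((n : ℝ) - 1) ∈ Icc 0 1 :=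
    ⟨sub_one_div_sub_one_nonneg hk (by omega), (sub_one_div_sub_one_lt_one hk hkn).le⟩
  have hfactor : ∀ x ∈ Ioo (0 : ℝ) 1,
      0 < (n : ℝ) * (n - 1).choose (k - 1) * x ^ (k - 1) * (1 - x) ^ (n - k - 1) := by
    intro x hx
    have hchoose : 0 < ((n - 1).choose (k - 1) : ℝ) := by
      exact_mod_cast Nat.choose_pos (by omega)
    exact mul_pos (mul_pos (mul_pos (by linarith) hchoose) (pow_pos hx.1 _))
      (pow_pos (sub_pos.2 hx.2) _)
  refine strictMonoOn_strictAntiOn_of_hasDerivAt hρ continuous_psiDerivNum.continuousOn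
    (fun x _ => hasDerivAt_psiDerivNum hk hkn x) (fun x hx => ?_) (fun x hx => ?_)
  · refine mul_pos (hfactor x ⟨hx.1, hx.2.trans_le hρ.2⟩) ?_
    have := (lt_div_iff₀ hn1).1 hx.2
    linarith
  · refine mul_neg_of_pos_of_neg (hfactor x ⟨hρ.1.trans_lt hx.1, hx.2⟩) ?_
    have := (div_lt_iff₀ hn1).1 hx.1
    linarith

theorem exists_psiDerivNum_sign_change (hn : 2 ≤ n) (hk : 1 ≤ k) (hkn : k ≤ n) :
    ∃ c ∈ Icc (((k : ℝ) - 1) / ((n : ℝ) - 1)) 1,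
      (∀ x ∈ Ioo 0 c, 0 < psiDerivNum n k x) ∧ ∀ x ∈ Ioo c 1, psiDerivNum n k x < 0 := by
  rcases hkn.lt_or_eq with hkn | rfl
  · obtain ⟨hmono, hanti⟩ := strictMonoOn_strictAntiOn_psiDerivNum hk hkn
    obtain ⟨c, hc, hsign⟩ := exists_pos_neg_of_strictMonoOn_of_strictAntiOn
      (sub_one_div_sub_one_nonneg hk (by omega)) (sub_one_div_sub_one_lt_one hk hkn) hmono hanti
      continuous_psiDerivNum.continuousOn (psiDerivNum_zero hk)
      (by rw [psiDerivNum_one hkn]; norm_num)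
    exact ⟨c, Ico_subset_Icc_self hc, hsign⟩
  · have hk1 : (0 : ℝ) < k - 1 := by
      have : (2 : ℝ) ≤ k := by exact_mod_cast hn
      linarith
    refine ⟨1, ⟨(div_self hk1.ne').le, le_rfl⟩, fun x hx => ?_,
      fun x hx => absurd hx.1 hx.2.not_gt⟩
    rw [psiDerivNum_self hk]
    exact mul_pos hk1 (pow_pos hx.1 k)

end Psi

/-- For `n ≥ 2` there is `p* ∈ [(k-1)/(n-1), 1]` such that `ψ_{n,k}` is strictly increasing
on `[0,p*]` and strictly decreasing on `[p*,1]`; in particular `ψ_{n,k}` attains its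
maximum over `[0,1]` exactly at `p*`. -/
theorem psi_unimodal (n k : ℕ) (hn : 2 ≤ n) (hk1 : 1 ≤ k) (hkn : k ≤ n) :
    ∃ pstar ∈ Set.Icc (((k:ℝ) - 1) / ((n:ℝ) - 1)) 1,
      StrictMonoOn (psi n k) (Set.Icc 0 pstar) ∧
      StrictAntiOn (psi n k) (Set.Icc pstar 1) ∧
      (∀ p ∈ Set.Icc (0:ℝ) 1, psi n k p ≤ psi n k pstar) ∧
      (∀ p ∈ Set.Icc (0:ℝ) 1, p ≠ pstar → psi n k p < psi n k pstar) := by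
  obtain ⟨c, hc, hpos, hneg⟩ := exists_psiDerivNum_sign_change hn hk1 hkn
  have hc01 : c ∈ Icc (0 : ℝ) 1 :=
    ⟨(sub_one_div_sub_one_nonneg hk1 (by omega)).trans hc.1, hc.2⟩
  obtain ⟨hmono, hanti⟩ := strictMonoOn_strictAntiOn_of_hasDerivAt hc01
    (continuous_psi hk1).continuousOn (fun x hx => hasDerivAt_psi hk1 hkn hx.1.ne')
    (fun x hx => mul_pos (inv_pos.2 (pow_pos hx.1 2)) (hpos x hx))
    (fun x hx => mul_neg_of_pos_of_neg (inv_pos.2 (pow_pos (hc01.1.trans_lt hx.1) 2)) (hneg x hx))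
  have hlt : ∀ p ∈ Icc (0 : ℝ) 1, p ≠ c → psi n k p < psi n k c :=
    fun p hp hpc => hmono.apply_lt_of_strictAntiOn hanti hc01 hp hpc
  refine ⟨c, hc, hmono, hanti, fun p hp => ?_, hlt⟩
  rcases eq_or_ne p c with rfl | hpc
  exacts [le_rfl, (hlt p hp hpc).le]
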